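/- Let E_h, E_x, E_y, H be finite-dimensional real inner product spaces, f : E_h × E_x × H → E_h a C¹ transition map, g : E_h → E_y a C¹ prediction map, x₁, …, x_L ∈ E_x inputs, and targets y₁, …, y_L ∈ E_y. Define head maps αᵢ(h, θ) by α₀(h, θ) = h, αᵢ(h, θ) = f(α_{i−1}(h, θ), xᵢ, θ), write hᵢ = αᵢ(h, θ), ŷᵢ = g(hᵢ), eᵢ = ŷᵢ − yᵢ, μ_{j,i} = f_j ∘ ⋯ ∘ fᵢ (identity for j < i), and εᵢ = Σ_{j=i}^{L} D*μ_{j,i+1}(hᵢ) · D*g(hⱼ) · eⱼ. Then the gradient with respect to θ of the total loss θ ↦ Σ_{i=1}^{L} ½‖g(αᵢ(h, θ)) − yᵢ‖² equals Σ_{i=1}^{L} ∇*_θ f(h_{i−1}, xᵢ, θ) · εᵢ. -/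

import Mathlib

/-! Unrolling the recursion `αᵢ₊₁(θ) = f(αᵢ(θ), xᵢ₊₁, θ)` with the chain rule gives
`Dαᵢ = Σ_{k ≤ i} Dμ_{i,k+1}(hₖ) ∘ ∇_θ f(hₖ₋₁, xₖ, θ)`. The gradient of `½‖g(αᵢ) − yᵢ‖²` is
`(Dg(hᵢ) ∘ Dαᵢ)* eᵢ`; taking adjoints term by term and exchanging the double sum over `k ≤ i`
collects, for each `k`, exactly the terms of `εₖ`. -/

/-- The RNN head map: `headMap f x 0 h θ = h` and
`headMap f x (i+1) h θ = f (headMap f x i h θ, x (i+1), θ)`, i.e. `αᵢ(h, θ)`. -/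
def headMap {Eh Ex H : Type*} (f : Eh × Ex × H → Eh) (x : ℕ → Ex) :
    ℕ → Eh → H → Eh
  | 0, h, _ => h
  | i + 1, h, θ => f (headMap f x i h θ, x (i + 1), θ)

/-- `muChain f i j = μ_{j,i} = f_j ∘ ⋯ ∘ f_i` for `i ≤ j`, and the identity for `j < i`
(indices are 1-based: `muChain f i 0 = id`). -/
def muChain {E : Type*} (f : ℕ → E → E) (i : ℕ) : ℕ → E → E
  | 0 => id
  | j + 1 => if j + 1 < i then id else f (j + 1) ∘ muChain f i j

open ContinuousLinearMap Finset

section MuChain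

variable {E : Type*} (F : ℕ → E → E)

theorem muChain_of_lt {i j : ℕ} (hj : j < i) : muChain F i j = id := by
  cases j with
  | zero => rfl
  | succ j => simp [muChain, hj]

theorem muChain_succ_of_le {i j : ℕ} (hij : i ≤ j + 1) :
    muChain F i (j + 1) = F (j + 1) ∘ muChain F i j := by
  simp [muChain, not_lt.mpr hij]

theorem muChain_apply_of_le {s : ℕ → E} (hs : ∀ j, s (j + 1) = F (j + 1) (s j))
    {k j : ℕ} (hkj : k ≤ j) : muChain F (k + 1) j (s k) = s j := by
  induction j, hkj using Nat.le_induction with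
  | base => rw [muChain_of_lt F k.lt_succ_self, id]
  | succ j hkj ih => rw [muChain_succ_of_le F (by omega), Function.comp_apply, ih, hs]

variable [NormedAddCommGroup E] [NormedSpace ℝ E]

theorem differentiable_muChain (hF : ∀ k, Differentiable ℝ (F k)) (i j : ℕ) :
    Differentiable ℝ (muChain F i j) := by
  induction j with
  | zero => exact differentiable_id
  | succ j ih =>
    by_cases hj : j + 1 < i
    · rw [muChain_of_lt F hj]
      exact differentiable_id
    · rw [muChain_succ_of_le F (by omega)]
      exact (hF _).comp ih

theorem fderiv_muChain_self (k : ℕ) (z : E) :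
    fderiv ℝ (muChain F (k + 1) k) z = .id ℝ E := by
  rw [muChain_of_lt F k.lt_succ_self]
  exact fderiv_id

theorem fderiv_muChain_succ (hF : ∀ k, Differentiable ℝ (F k)) {s : ℕ → E}
    (hs : ∀ j, s (j + 1) = F (j + 1) (s j)) {k j : ℕ} (hkj : k ≤ j) :
    fderiv ℝ (muChain F (k + 1) (j + 1)) (s k) =
      fderiv ℝ (F (j + 1)) (s j) ∘L fderiv ℝ (muChain F (k + 1) j) (s k) := by
  have hF' := (hF (j + 1)).differentiableAt (x := muChain F (k + 1) j (s k))
  rw [muChain_succ_of_le F (by omega),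
    fderiv_comp _ hF' (differentiable_muChain F hF _ _).differentiableAt,
    muChain_apply_of_le F hs hkj]

end MuChain

theorem HasFDerivAt.comp_prodMk_id {E H G : Type*}
    [NormedAddCommGroup E] [NormedSpace ℝ E] [NormedAddCommGroup H] [NormedSpace ℝ H]
    [NormedAddCommGroup G] [NormedSpace ℝ G] {φ : E × H → G} {α : H → E}
    {A : H →L[ℝ] E} {θ : H} (hφ : DifferentiableAt ℝ φ (α θ, θ)) (hα : HasFDerivAt α A θ) :
    HasFDerivAt (fun θ' => φ (α θ', θ'))
      (fderiv ℝ (fun z => φ (z, θ)) (α θ) ∘L A + fderiv ℝ (fun θ' => φ (α θ, θ')) θ) θ := by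
  have hD := hφ.hasFDerivAt
  have hleft : fderiv ℝ (fun z => φ (z, θ)) (α θ) = fderiv ℝ φ (α θ, θ) ∘L inl ℝ E H :=
    (hD.comp (α θ) (hasFDerivAt_prodMk_left (α θ) θ)).fderiv
  have hright : fderiv ℝ (fun θ' => φ (α θ, θ')) θ = fderiv ℝ φ (α θ, θ) ∘L inr ℝ E H :=
    (hD.comp θ (hasFDerivAt_prodMk_right (α θ) θ)).fderiv
  refine (hD.comp (f := fun θ' => (α θ', θ')) θ (hα.prodMk (hasFDerivAt_id θ))).congr_fderiv ?_
  ext v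
  simp [hleft, hright, ← map_add]

section Gradient

variable {H F : Type*} [NormedAddCommGroup H] [InnerProductSpace ℝ H] [CompleteSpace H]
  [NormedAddCommGroup F] [InnerProductSpace ℝ F] [CompleteSpace F] {θ : H}

theorem HasGradientAt.sum {ι : Type*} {s : Finset ι} {φ : ι → H → ℝ} {φ' : ι → H}
    (h : ∀ i ∈ s, HasGradientAt (φ i) (φ' i) θ) :
    HasGradientAt (fun θ' => ∑ i ∈ s, φ i θ') (∑ i ∈ s, φ' i) θ := by
  rw [hasGradientAt_iff_hasFDerivAt, map_sum]
  exact HasFDerivAt.fun_sum fun i hi => hasGradientAt_iff_hasFDerivAt.mp (h i hi)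

theorem HasFDerivAt.hasGradientAt_half_norm_sq_sub {u : H → F} {A : H →L[ℝ] F}
    (hu : HasFDerivAt u A θ) (y : F) :
    HasGradientAt (fun θ' => (1 / 2 : ℝ) * ‖u θ' - y‖ ^ 2) (adjoint A (u θ - y)) θ := by
  rw [hasGradientAt_iff_hasFDerivAt]
  refine (((hu.sub_const y).norm_sq).const_mul (1 / 2 : ℝ)).congr_fderiv ?_
  ext v
  simp [InnerProductSpace.toDual_apply_apply, adjoint_inner_left]

end Gradient

section RNN

variable {Eh Ex H : Type*} [NormedAddCommGroup Eh] [NormedSpace ℝ Eh]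
  [NormedAddCommGroup Ex] [NormedSpace ℝ Ex] [NormedAddCommGroup H] [NormedSpace ℝ H]
  {f : Eh × Ex × H → Eh} (x : ℕ → Ex) (h : Eh) (θ : H)

theorem hasFDerivAt_headMap (hf : Differentiable ℝ f) (i : ℕ) :
    HasFDerivAt (headMap f x i h)
      (∑ k ∈ Icc 1 i,
        fderiv ℝ (muChain (fun k h' => f (h', x k, θ)) (k + 1) i) (headMap f x k h θ) ∘L
          fderiv ℝ (fun θ' => f (headMap f x (k - 1) h θ, x k, θ')) θ) θ := by
  have hF : ∀ k, Differentiable ℝ fun h' => f (h', x k, θ) := fun k =>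
    hf.comp (differentiable_id.prodMk (differentiable_const _))
  induction i with
  | zero =>
    simp only [Icc_eq_empty_of_lt, zero_lt_one, sum_empty]
    exact hasFDerivAt_const h θ
  | succ i ih =>
    have hstep := HasFDerivAt.comp_prodMk_id (φ := fun p : Eh × H => f (p.1, x (i + 1), p.2))
      (hf.comp (by fun_prop)).differentiableAt ih
    refine (hstep : HasFDerivAt (headMap f x (i + 1) h) _ θ).congr_fderiv ?_
    rw [sum_Icc_succ_top (by omega), fderiv_muChain_self, id_comp, Nat.add_sub_cancel,
      comp_finsetSum]
    congr 1
    refine sum_congr rfl fun k hk => ?_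
    rw [fderiv_muChain_succ _ hF (s := fun j => headMap f x j h θ) (fun _ => rfl)
      (mem_Icc.mp hk).2, comp_assoc]

end RNN

theorem stmt_16_general
    {Eh Ex Ey H : Type*}
    [NormedAddCommGroup Eh] [InnerProductSpace ℝ Eh] [FiniteDimensional ℝ Eh]
    [NormedAddCommGroup Ex] [InnerProductSpace ℝ Ex]
    [NormedAddCommGroup Ey] [InnerProductSpace ℝ Ey] [FiniteDimensional ℝ Ey]
    [NormedAddCommGroup H] [InnerProductSpace ℝ H] [FiniteDimensional ℝ H]
    (f : Eh × Ex × H → Eh) (g : Eh → Ey)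
    (hf : ContDiff ℝ 1 f) (hg : ContDiff ℝ 1 g)
    (L : ℕ) (x : ℕ → Ex) (y : ℕ → Ey) (θ : H) (h : Eh)
    (eps : ℕ → Eh)
    (heps : ∀ i, eps i =
      ∑ j ∈ Finset.Icc i L,
        ContinuousLinearMap.adjoint
          (fderiv ℝ (muChain (fun k h' => f (h', x k, θ)) (i + 1) j)
            (headMap f x i h θ))
          (ContinuousLinearMap.adjoint (fderiv ℝ g (headMap f x j h θ))
            (g (headMap f x j h θ) - y j))) :
    gradient
        (fun θ' => ∑ i ∈ Finset.Icc 1 L,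
          (1 / 2 : ℝ) * ‖g (headMap f x i h θ') - y i‖ ^ 2) θ =
      ∑ i ∈ Finset.Icc 1 L,
        ContinuousLinearMap.adjoint
          (fderiv ℝ (fun θ' => f (headMap f x (i - 1) h θ, x i, θ')) θ) (eps i) := by
  have hα := hasFDerivAt_headMap x h θ (hf.differentiable one_ne_zero)
  have hgα : ∀ i, HasFDerivAt (fun θ' => g (headMap f x i h θ'))
      (fderiv ℝ g (headMap f x i h θ) ∘L _) θ := fun i =>
    ((hg.differentiable one_ne_zero) _).hasFDerivAt.comp θ (hα i)
  rw [(HasGradientAt.sum fun i _ => (hgα i).hasGradientAt_half_norm_sq_sub (y i)).gradient]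
  simp only [heps, adjoint_comp, map_sum, _root_.sum_apply, comp_apply]
  exact sum_comm' fun i k => by simp only [mem_Icc]; omega

/-- total BPTT gradient with respect to the transition parameters.
With transition `f`, prediction `g`, head maps `αᵢ`, hidden states `hᵢ = αᵢ(h,θ)`,
`ŷᵢ = g(hᵢ)`, `eᵢ = ŷᵢ − yᵢ`, `μ_{j,i} = f_j ∘ ⋯ ∘ f_i`, and backpropagated errors
`εᵢ = Σ_{j=i}^{L} D*μ_{j,i+1}(hᵢ) · D*g(hⱼ) · eⱼ`, the gradient of the total loss
`θ ↦ Σ_{i=1}^{L} ½‖g(αᵢ(h,θ)) − yᵢ‖²` equals `Σ_{i=1}^{L} ∇*_θ f(h_{i−1}, xᵢ, θ) · εᵢ`. -/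
theorem stmt_16
    {Eh Ex Ey H : Type*}
    [NormedAddCommGroup Eh] [InnerProductSpace ℝ Eh] [FiniteDimensional ℝ Eh]
    [NormedAddCommGroup Ex] [InnerProductSpace ℝ Ex] [FiniteDimensional ℝ Ex]
    [NormedAddCommGroup Ey] [InnerProductSpace ℝ Ey] [FiniteDimensional ℝ Ey]
    [NormedAddCommGroup H] [InnerProductSpace ℝ H] [FiniteDimensional ℝ H]
    (f : Eh × Ex × H → Eh) (g : Eh → Ey)
    (hf : ContDiff ℝ 1 f) (hg : ContDiff ℝ 1 g)
    (L : ℕ) (x : ℕ → Ex) (y : ℕ → Ey) (θ : H) (h : Eh)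
    (eps : ℕ → Eh)
    (heps : ∀ i, eps i =
      ∑ j ∈ Finset.Icc i L,
        ContinuousLinearMap.adjoint
          (fderiv ℝ (muChain (fun k h' => f (h', x k, θ)) (i + 1) j)
            (headMap f x i h θ))
          (ContinuousLinearMap.adjoint (fderiv ℝ g (headMap f x j h θ))
            (g (headMap f x j h θ) - y j))) :
    gradient
        (fun θ' => ∑ i ∈ Finset.Icc 1 L,
          (1 / 2 : ℝ) * ‖g (headMap f x i h θ') - y i‖ ^ 2) θ =
      ∑ i ∈ Finset.Icc 1 L,
        ContinuousLinearMap.adjoint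
          (fderiv ℝ (fun θ' => f (headMap f x (i - 1) h θ, x i, θ')) θ) (eps i) :=
  stmt_16_general f g hf hg L x y θ h eps heps
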